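/- Let L be a lattice of dimension n ≥ 5 and maximal index 2, with sublattice L₀ of index 2 generated by n independent minimal vectors e₁,…,eₙ, and e = (e₁+⋯+eₙ)/2 ∈ L. Then there exist at most four indices i such that e − eᵢ is a minimal vector of L. -/

import Mathlib

open Finset

noncomputable section

/-- The ambient Euclidean space of dimension `n`. -/
abbrev Euc (n : ℕ) := EuclideanSpace ℝ (Fin n)

/-- `x` is a minimal (shortest nonzero) vector of the lattice `L`. -/
def IsMinVec {n : ℕ} (L : Submodule ℤ (Euc n)) (x : Euc n) : Prop :=
  x ∈ L ∧ x ≠ 0 ∧ ∀ y ∈ L, y ≠ 0 → ‖x‖ ≤ ‖y‖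

/-- The standing setting of the paper: a lattice `L` of dimension `n` together with
`n` linearly independent minimal vectors `e₁, …, eₙ`. -/
structure LatticeSetup (n : ℕ) where
  L : Submodule ℤ (Euc n)
  e : Fin n → Euc n
  indep : LinearIndependent ℤ e
  e_min : ∀ i, IsMinVec L (e i)

/-- The sublattice `L₀ = ⟨e₁,…,eₙ⟩`. -/
def LatticeSetup.L0 {n : ℕ} (S : LatticeSetup n) : Submodule ℤ (Euc n) :=
  Submodule.span ℤ (Set.range S.e)

/-- The vector `e = (e₁ + ⋯ + eₙ)/2`. -/
def LatticeSetup.eVec {n : ℕ} (S : LatticeSetup n) : Euc n :=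
  (1/2 : ℝ) • ∑ i, S.e i

/-- `L₀` has index `2` in `L`, and `L = ⟨L₀, e⟩` with `e = (e₁+⋯+eₙ)/2`. -/
def LatticeSetup.Index2 {n : ℕ} (S : LatticeSetup n) : Prop :=
  S.eVec ∈ S.L ∧ S.eVec ∉ S.L0 ∧ S.L = S.L0 ⊔ Submodule.span ℤ {S.eVec}

/-- Every sublattice of `L` spanned by `n` independent minimal vectors has
index at most `2` in `L` (i.e. the maximal index of `L` is at most `2`). -/
def LatticeSetup.MaxIndexLE2 {n : ℕ} (S : LatticeSetup n) : Prop :=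
  ∀ v : Fin n → Euc n, (∀ i, IsMinVec S.L (v i)) → LinearIndependent ℤ v →
    (Submodule.span ℤ (Set.range v)).toAddSubgroup.relIndex S.L.toAddSubgroup ≤ 2

/-- The length of `L` equals `n`: every linearly independent set `X` of minimal
vectors with `∑_{x∈X} x ≡ 0 mod 2L` has cardinality `n`. -/
def LatticeSetup.LengthEq {n : ℕ} (S : LatticeSetup n) : Prop :=
  ∀ X : Finset (Euc n), (∀ x ∈ X, IsMinVec S.L x) →
    LinearIndependent ℤ (Subtype.val : {y // y ∈ X} → Euc n) →
    (∃ y ∈ S.L, ∑ x ∈ X, x = (2 : ℤ) • y) → X.card = n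

/-- The standing hypotheses: maximal index `2` (attained by `L₀`) and length `n`. -/
def LatticeSetup.Standing {n : ℕ} (S : LatticeSetup n) : Prop :=
  S.Index2 ∧ S.MaxIndexLE2 ∧ S.LengthEq

/-- The vector `x_I = e - ∑_{i ∈ I} eᵢ`. -/
def LatticeSetup.xI {n : ℕ} (S : LatticeSetup n) (I : Finset (Fin n)) : Euc n :=
  S.eVec - ∑ i ∈ I, S.e i

/-- The weight of an index `i` relative to a family `I₁,…,I_r` of index sets. -/
def wt {n r : ℕ} (I : Fin r → Finset (Fin n)) (i : Fin n) : ℕ :=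
  (Finset.univ.filter fun k => i ∈ I k).card

/-- The weight of an index relative to a triple of index sets. -/
def wt3 {n : ℕ} (I1 I2 I3 : Finset (Fin n)) (i : Fin n) : ℕ :=
  (if i ∈ I1 then 1 else 0) + (if i ∈ I2 then 1 else 0) + (if i ∈ I3 then 1 else 0)

/-- The relation `∼` relative to a family: `I_k ∼ I_k'` iff `I_k ∩ I_k'` contains an
index of weight `2`. -/
def simF {n r : ℕ} (I : Fin r → Finset (Fin n)) (k k' : Fin r) : Prop :=
  ∃ i ∈ I k ∩ I k', wt I i = 2

/-- A triple of index sets forms a `3`-cycle for `∼` (weights relative to the triple). -/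
def Cycle3 {n : ℕ} (I1 I2 I3 : Finset (Fin n)) : Prop :=
  (∃ i ∈ I1 ∩ I2, wt3 I1 I2 I3 i = 2) ∧ (∃ i ∈ I2 ∩ I3, wt3 I1 I2 I3 i = 2) ∧
    (∃ i ∈ I1 ∩ I3, wt3 I1 I2 I3 i = 2)

/-- The family `F` contains no `3`-cycle for the relation `∼`. -/
def NoCycle3 {n : ℕ} (F : Finset (Finset (Fin n))) : Prop :=
  ∀ I1 ∈ F, ∀ I2 ∈ F, ∀ I3 ∈ F, I1 ≠ I2 → I2 ≠ I3 → I1 ≠ I3 → ¬ Cycle3 I1 I2 I3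

/-- A lattice is perfect if the projections `x xᵀ`, `x` minimal, span the space of
symmetric matrices. -/
def IsPerfect {n : ℕ} (L : Submodule ℤ (Euc n)) : Prop :=
  Submodule.span ℝ ((fun x : Euc n => Matrix.of fun i j => x i * x j) ''
      {x | IsMinVec L x}) =
    Submodule.span ℝ {A : Matrix (Fin n) (Fin n) ℝ | A.IsSymm}


/-!
If `e - eᵢ` were minimal for the five indices `i ∈ K`, replace each such `eᵢ` by `e - eᵢ`.
The new family `v` consists of `n` minimal vectors with `∑_{i ∈ K} vᵢ - ∑_{i ∉ K} vᵢ = 3e`, so it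
is independent and `L = M + ℤe` for `M = ⟨v⟩`, with `3e ∈ M`. The functional `eᵢ ↦ 2·[i ∈ K]`
takes values in `3ℤ` on `M` but the value `5` at `e`, so `e ∉ M` and `[L : M] = 3`, contradicting
maximal index `2`.
-/

theorem Submodule.relIndex_eq_of_le_sup_span_singleton {G : Type*} [AddCommGroup G]
    {M L : Submodule ℤ G} {x : G} {p : ℕ} [Fact p.Prime] (hxL : x ∈ L)
    (hL : L ≤ M ⊔ span ℤ {x}) (hpx : (p : ℤ) • x ∈ M) (hx : x ∉ M) :
    M.toAddSubgroup.relIndex L.toAddSubgroup = p := by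
  set y : L.toAddSubgroup ⧸ M.toAddSubgroup.addSubgroupOf L.toAddSubgroup :=
    QuotientAddGroup.mk ⟨x, hxL⟩
  have hgen : ∀ q, q ∈ AddSubgroup.zmultiples y := by
    rintro ⟨z, hz⟩
    obtain ⟨m, hm, w, hw, rfl⟩ := mem_sup.mp (hL hz)
    obtain ⟨k, rfl⟩ := mem_span_singleton.mp hw
    refine ⟨k, (QuotientAddGroup.eq_iff_sub_mem).mpr ?_⟩
    simpa [AddSubgroup.mem_addSubgroupOf] using neg_mem hm
  have hord : addOrderOf y = p := by
    refine addOrderOf_eq_prime ?_ ?_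
    · rw [← natCast_zsmul, ← QuotientAddGroup.mk_zsmul, QuotientAddGroup.eq_zero_iff]
      simpa [AddSubgroup.mem_addSubgroupOf] using hpx
    · rw [Ne, QuotientAddGroup.eq_zero_iff]
      simpa [AddSubgroup.mem_addSubgroupOf] using hx
  rw [AddSubgroup.relIndex, AddSubgroup.index, ← hord,
    addOrderOf_eq_card_of_forall_mem_zmultiples hgen]

theorem LinearIndependent.exists_linearMap_apply_eq {ι V : Type*} [AddCommGroup V] [Module ℚ V]
    {v : ι → V} (hv : LinearIndependent ℤ v) (w : ι → ℚ) :
    ∃ u : V →ₗ[ℚ] ℚ, ∀ i, u (v i) = w i := by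
  have hQ : LinearIndependent ℚ v := (LinearIndependent.iff_fractionRing ℤ ℚ).mp hv
  obtain ⟨u, hu⟩ := LinearMap.exists_extend ((Module.Basis.span hQ).constr ℚ w)
  refine ⟨u, fun i => ?_⟩
  have := LinearMap.congr_fun hu (Module.Basis.span hQ i)
  rwa [Module.Basis.constr_basis, LinearMap.comp_apply, Submodule.subtype_apply,
    Module.Basis.span_apply] at this

namespace LatticeSetup

open Submodule

variable {n : ℕ} (S : LatticeSetup n) (K : Finset (Fin n))

def exchange : Fin n → Euc n := fun i => if i ∈ K then S.eVec - S.e i else S.e i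

theorem e_eq_exchange (i : Fin n) :
    S.e i = if i ∈ K then S.eVec - S.exchange K i else S.exchange K i := by
  unfold exchange; split_ifs <;> simp

theorem eVec_add_eVec : S.eVec + S.eVec = ∑ i, S.e i := by
  rw [eVec, ← two_smul ℝ, smul_smul]
  norm_num

theorem isMinVec_exchange (hK : ∀ i ∈ K, IsMinVec S.L (S.eVec - S.e i)) (i : Fin n) :
    IsMinVec S.L (S.exchange K i) := by
  unfold exchange; split_ifs with hi
  exacts [hK i hi, S.e_min i]

theorem smul_eVec_eq_sum_exchange :
    ((#K : ℤ) - 2) • S.eVec = ∑ k ∈ K, S.exchange K k - ∑ k ∈ Kᶜ, S.exchange K k := by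
  have hK : ∑ k ∈ K, S.exchange K k = #K • S.eVec - ∑ k ∈ K, S.e k := by
    rw [← Finset.sum_const, ← Finset.sum_sub_distrib]
    exact Finset.sum_congr rfl fun k hk => if_pos hk
  have hKc : ∑ k ∈ Kᶜ, S.exchange K k = ∑ k ∈ Kᶜ, S.e k :=
    Finset.sum_congr rfl fun k hk => if_neg (Finset.mem_compl.mp hk)
  have hsum := Finset.sum_add_sum_compl K S.e
  rw [← eVec_add_eVec] at hsum
  rw [hK, hKc, sub_sub, hsum, sub_smul, natCast_zsmul]
  module

theorem smul_eVec_mem_span_exchange :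
    ((#K : ℤ) - 2) • S.eVec ∈ span ℤ (Set.range (S.exchange K)) := by
  rw [smul_eVec_eq_sum_exchange]
  exact sub_mem (sum_mem fun k _ => subset_span ⟨k, rfl⟩) (sum_mem fun k _ => subset_span ⟨k, rfl⟩)

theorem eVec_mem_span_rat : S.eVec ∈ span ℚ (Set.range S.e) := by
  have h : S.eVec = (1 / 2 : ℚ) • ∑ i, S.e i := by
    rw [← eVec_add_eVec, ← two_smul ℚ, smul_smul]
    norm_num
  rw [h]
  exact smul_mem _ _ (sum_mem fun i _ => subset_span ⟨i, rfl⟩)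

theorem span_rat_exchange (hK : #K ≠ 2) :
    span ℚ (Set.range (S.exchange K)) = span ℚ (Set.range S.e) := by
  have he : S.eVec ∈ span ℚ (Set.range (S.exchange K)) := by
    have h := span_le_restrictScalars ℤ ℚ _ (S.smul_eVec_mem_span_exchange K)
    rw [restrictScalars_mem, ← Int.cast_smul_eq_zsmul ℚ] at h
    have hK' : (((#K : ℤ) - 2 : ℤ) : ℚ) ≠ 0 := by
      push_cast
      rw [sub_ne_zero]
      exact_mod_cast hK
    simpa only [inv_smul_smul₀ hK'] using smul_mem _ (((#K : ℤ) - 2 : ℤ) : ℚ)⁻¹ h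
  apply le_antisymm <;> rw [span_le] <;> rintro _ ⟨i, rfl⟩
  · unfold exchange; split_ifs
    · exact sub_mem S.eVec_mem_span_rat (subset_span ⟨i, rfl⟩)
    · exact subset_span ⟨i, rfl⟩
  · rw [S.e_eq_exchange K i]; split_ifs
    · exact sub_mem he (subset_span ⟨i, rfl⟩)
    · exact subset_span ⟨i, rfl⟩

theorem linearIndependent_exchange (hK : #K ≠ 2) : LinearIndependent ℤ (S.exchange K) := by
  have hQ : LinearIndependent ℚ S.e := (LinearIndependent.iff_fractionRing ℤ ℚ).mp S.indep
  rw [LinearIndependent.iff_fractionRing ℤ ℚ, linearIndependent_iff_card_eq_finrank_span,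
    Set.finrank, S.span_rat_exchange K hK, finrank_span_eq_card hQ]

theorem eVec_notMem_span_exchange (hK : ¬ ((#K : ℤ) - 2 ∣ #K)) :
    S.eVec ∉ span ℤ (Set.range (S.exchange K)) := by
  obtain ⟨u, hu⟩ := S.indep.exists_linearMap_apply_eq fun j => if j ∈ K then 2 else 0
  have hue : u S.eVec = #K := by
    have h := congrArg u S.eVec_add_eVec
    simp only [map_add, map_sum, hu, Finset.sum_ite_mem, Finset.univ_inter,
      Finset.sum_const, nsmul_eq_mul] at h
    linarith
  set N := (span ℤ {((#K : ℚ) - 2)}).comap (u.restrictScalars ℤ)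
  have hMN : span ℤ (Set.range (S.exchange K)) ≤ N := by
    rw [span_le]
    rintro _ ⟨k, rfl⟩
    simp only [N, SetLike.mem_coe, mem_comap, LinearMap.restrictScalars_apply,
      mem_span_singleton]
    unfold exchange; split_ifs with hk
    · exact ⟨1, by simp [hue, hu, hk]⟩
    · exact ⟨0, by simp [hu, hk]⟩
  intro he
  obtain ⟨m, hm⟩ := mem_span_singleton.mp (hMN he)
  rw [LinearMap.restrictScalars_apply, hue, zsmul_eq_mul] at hm
  exact hK ⟨m, by rw [mul_comm]; exact_mod_cast hm.symm⟩

theorem relIndex_span_exchange (h2 : S.Index2) (hK : #K = 5) :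
    (span ℤ (Set.range (S.exchange K))).toAddSubgroup.relIndex
      S.L.toAddSubgroup = 3 := by
  have : Fact (Nat.Prime 3) := ⟨Nat.prime_three⟩
  refine Submodule.relIndex_eq_of_le_sup_span_singleton h2.1 ?_ ?_
    (S.eVec_notMem_span_exchange K (by rw [hK]; decide))
  · rw [h2.2.2, L0]
    refine sup_le (span_le.mpr ?_) le_sup_right
    rintro _ ⟨i, rfl⟩
    have hv : S.exchange K i ∈ span ℤ (Set.range (S.exchange K)) ⊔ span ℤ {S.eVec} :=
      mem_sup_left (subset_span ⟨i, rfl⟩)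
    rw [S.e_eq_exchange K i]
    split_ifs
    · exact sub_mem (mem_sup_right (mem_span_singleton_self _)) hv
    · exact hv
  · simpa [hK] using S.smul_eVec_mem_span_exchange K

end LatticeSetup

theorem stmt1_general (n : ℕ) (S : LatticeSetup n)
    (h2 : S.Index2) (hmax : S.MaxIndexLE2) :
    {i : Fin n | IsMinVec S.L (S.eVec - S.e i)}.ncard ≤ 4 := by
  by_contra! h
  obtain ⟨K, hKT, hK⟩ := Set.exists_subset_card_eq h
  lift K to Finset (Fin n) using K.toFinite
  rw [Set.ncard_coe_finset] at hK
  have hidx := hmax _ (S.isMinVec_exchange K fun i hi => hKT hi)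
    (S.linearIndependent_exchange K (by omega))
  rw [S.relIndex_span_exchange K h2 hK] at hidx
  omega

/-- at most four minimal vectors of type 1. -/
theorem stmt1 (n : ℕ) (hn : 5 ≤ n) (S : LatticeSetup n)
    (h2 : S.Index2) (hmax : S.MaxIndexLE2) :
    {i : Fin n | IsMinVec S.L (S.eVec - S.e i)}.ncard ≤ 4 :=
  stmt1_general n S h2 hmax
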